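/- arXiv:1708.06153 — 3 statements merged into one kernel-verified Lean document; each statement's English description precedes it below -/
import Mathlib

section
/- If G is (k,1)-chordal, then for every chordal ab-path σ with L(σ) ≥ k and every pair of vertices a',b' ∈ σ with d_σ({a',b'},{a,b}) ≥ 2 and d_σ(a',b') ≥ k−4, the restriction σ' of σ between a' and b' is an ab-N₁-separator. -/
/- Combinatorial model: a graph with unit edge lengths, viewed through its
vertex set with the shortest-path metric `SimpleGraph.dist`. -/

namespace SimpleGraph

variable {V : Type*} (G : SimpleGraph V)

/-- `G` is `μ`-uniform: every vertex has at most `μ` neighbors. -/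
def UniformGraph (μ : ℕ) : Prop :=
  ∀ v : V, (G.neighborSet v).Finite ∧ (G.neighborSet v).ncard ≤ μ

/-- A walk is a geodesic if its length realizes the distance between its ends. -/
def IsGeodesic {a b : V} (p : G.Walk a b) : Prop := p.length = G.dist a b

/-- The length metric `d_w` on the subgraph formed by the edges of the walk `w`. -/
noncomputable def walkDist {a b : V} (w : G.Walk a b) (p q : V) : ℕ :=
  (SimpleGraph.fromEdgeSet {e | e ∈ w.edges}).dist p q

/-- `σ` is a shortcut of the cycle `c`: a path joining two vertices `p, q` of `c`
with `L(σ) < d_c(p,q)`. -/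
def IsShortcut {v p q : V} (c : G.Walk v v) (σ : G.Walk p q) : Prop :=
  σ.IsPath ∧ p ∈ c.support ∧ q ∈ c.support ∧ σ.length < G.walkDist c p q

/-- A strict shortcut meets the cycle only in its endpoints (the shortcut vertices). -/
def IsStrictShortcut {v p q : V} (c : G.Walk v v) (σ : G.Walk p q) : Prop :=
  G.IsShortcut c σ ∧ {x | x ∈ σ.support} ∩ {x | x ∈ c.support} = {p, q}

/-- `G` is `(k,m)`-chordal: every cycle of length at least `k` has a shortcut of
length at most `m`. -/
def KMChordal (k m : ℕ) : Prop :=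
  ∀ (v : V) (c : G.Walk v v), c.IsCycle → k ≤ c.length →
    ∃ (p q : V) (σ : G.Walk p q), G.IsShortcut c σ ∧ σ.length ≤ m

/-- `G` is `ε`-densely `(k,m)`-chordal on the family `F` of cycles: every cycle in `F`
of length at least `k` has strict shortcuts of length at most `m` whose shortcut
vertices are `ε`-dense in the cycle metric. -/
def DenselyChordalOn (F : ∀ v : V, G.Walk v v → Prop) (ε : ℝ) (k m : ℕ) : Prop :=
  ∀ (v : V) (c : G.Walk v v), c.IsCycle → F v c → k ≤ c.length →
    ∀ x ∈ c.support, ∃ (p q : V) (σ : G.Walk p q),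
      G.IsStrictShortcut c σ ∧ σ.length ≤ m ∧ (G.walkDist c x p : ℝ) < ε

/-- `G` is `ε`-densely `(k,m)`-chordal (on all cycles). -/
def DenselyChordal (ε : ℝ) (k m : ℕ) : Prop :=
  G.DenselyChordalOn (fun _ _ => True) ε k m

/-- `S` is an `ab`-separator: `a, b ∉ S` and every walk from `a` to `b` meets `S`. -/
def Separates (S : Set V) (a b : V) : Prop :=
  a ∉ S ∧ b ∉ S ∧ ∀ p : G.Walk a b, ∃ v ∈ p.support, v ∈ S

/-- `S` is a minimal `ab`-separator. -/
def MinimalABSeparator (S : Set V) (a b : V) : Prop :=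
  G.Separates S a b ∧ ∀ S' : Set V, S' ⊂ S → ¬ G.Separates S' a b

end SimpleGraph

namespace SimpleGraph

variable {V : Type*} (G : SimpleGraph V)

/-- `S` is an `ab`-`N_r`-separator: `a` and `b` lie in different components of
`G` minus the closed `r`-neighborhood of `S`. -/
def NrSeparates (S : Set V) (r : ℕ) (a b : V) : Prop :=
  (∀ s ∈ S, r < G.dist a s) ∧ (∀ s ∈ S, r < G.dist b s) ∧
    ∀ γ : G.Walk a b, ∃ w ∈ γ.support, ∃ s ∈ S, G.dist w s ≤ r

end SimpleGraph

namespace SimpleGraph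

variable {V : Type*} (G : SimpleGraph V)

/-- A path is chordal if it has no 1-shortcuts in `G`: every edge of `G` joining two
vertices of the path joins vertices at path-distance `1`. -/
def IsChordalPath {a b : V} (σ : G.Walk a b) : Prop :=
  σ.IsPath ∧ ∀ x ∈ σ.support, ∀ y ∈ σ.support, G.Adj x y → G.walkDist σ x y ≤ 1

end SimpleGraph

namespace SimpleGraph
namespace Walk
variable {V : Type*} {G : SimpleGraph V}

def mytake {u v : V} : (w : G.Walk u v) → (n : ℕ) → G.Walk u (w.getVert n)
  | .nil, _ => .nil
  | .cons _ _, 0 => .nil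
  | .cons h q, (n+1) => .cons h (mytake q n)

def mydrop {u v : V} : (w : G.Walk u v) → (n : ℕ) → G.Walk (w.getVert n) v
  | .nil, _ => .nil
  | .cons h q, 0 => .cons h q
  | .cons _ q, (n+1) => mydrop q n

@[simp] lemma mytake_length {u v : V} (w : G.Walk u v) (n : ℕ) :
    (w.mytake n).length = min n w.length := by
  induction w generalizing n with
  | nil => simp [mytake]
  | cons h q ih =>
    cases n with
    | zero => simp [mytake]; rfl
    | succ n => simp [mytake, ih, Nat.succ_min_succ]

@[simp] lemma mydrop_length {u v : V} (w : G.Walk u v) (n : ℕ) :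
    (w.mydrop n).length = w.length - n := by
  induction w generalizing n with
  | nil => simp [mydrop]
  | cons h q ih =>
    cases n with
    | zero => simp [mydrop]; rfl
    | succ n => simp [mydrop, ih, Nat.succ_sub_succ]

lemma mytake_getVert {u v : V} (w : G.Walk u v) (n t : ℕ) :
    (w.mytake n).getVert t = w.getVert (min t n) := by
  induction w generalizing n t with
  | nil => simp [mytake, Walk.getVert_of_length_le]
  | cons h q ih =>
    cases n with
    | zero => simp [mytake, Walk.getVert_of_length_le]; rfl
    | succ n =>
      cases t with
      | zero => simp [mytake]
      | succ t => simpa [mytake, Nat.succ_min_succ] using ih n t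

lemma mydrop_getVert {u v : V} (w : G.Walk u v) (n t : ℕ) :
    (w.mydrop n).getVert t = w.getVert (n + t) := by
  induction w generalizing n t with
  | nil => simp [mydrop, Walk.getVert_of_length_le]
  | cons h q ih =>
    cases n with
    | zero => simp [mydrop]; rfl
    | succ n =>
      have : n + 1 + t = (n + t) + 1 := by omega
      simp [mydrop, ih, this]

lemma mytake_support_subset {u v : V} (w : G.Walk u v) (n : ℕ) :
    (w.mytake n).support ⊆ w.support := by
  induction w generalizing n with
  | nil => simp [mytake]
  | cons h q ih =>
    cases n with
    | zero => intro x hx; simp [mytake] at hx; replace hx := List.mem_singleton.mp hx; simp [hx]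
    | succ n =>
      intro x hx
      simp only [mytake, support_cons, List.mem_cons] at hx ⊢
      rcases List.mem_cons.mp hx with h1 | h1
      · exact Or.inl h1
      · exact Or.inr (ih n h1)

lemma mydrop_support_subset {u v : V} (w : G.Walk u v) (n : ℕ) :
    (w.mydrop n).support ⊆ w.support := by
  induction w generalizing n with
  | nil => simp [mydrop, Walk.getVert_of_length_le]
  | cons h q ih =>
    cases n with
    | zero => simp [mydrop]; exact List.Subset.refl _
    | succ n =>
      intro x hx
      simp only [support_cons, List.mem_cons]
      exact Or.inr (ih n hx)

lemma mytake_edges_subset {u v : V} (w : G.Walk u v) (n : ℕ) :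
    (w.mytake n).edges ⊆ w.edges := by
  induction w generalizing n with
  | nil => simp [mytake]
  | cons h q ih =>
    cases n with
    | zero => simp [mytake]; exact List.nil_subset _
    | succ n =>
      intro e he
      simp only [mytake, edges_cons, List.mem_cons] at he ⊢
      rcases List.mem_cons.mp he with h1 | h1
      · exact Or.inl h1
      · exact Or.inr (ih n h1)

lemma mydrop_edges_subset {u v : V} (w : G.Walk u v) (n : ℕ) :
    (w.mydrop n).edges ⊆ w.edges := by
  induction w generalizing n with
  | nil => simp [mydrop]
  | cons h q ih =>
    cases n with
    | zero => simp [mydrop]; exact List.Subset.refl _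
    | succ n =>
      intro e he
      simp only [edges_cons, List.mem_cons]
      exact Or.inr (ih n he)

lemma IsPath.mytake {u v : V} {w : G.Walk u v} (hw : w.IsPath) (n : ℕ) :
    (w.mytake n).IsPath := by
  induction w generalizing n with
  | nil => cases n <;> exact hw
  | cons h q ih =>
    cases n with
    | zero => simp only [Walk.mytake]; exact IsPath.nil
    | succ n =>
      rw [Walk.cons_isPath_iff] at hw
      exact (Walk.cons_isPath_iff _ _).mpr ⟨ih hw.1 n, fun hc => hw.2 (mytake_support_subset q n hc)⟩

lemma IsPath.mydrop {u v : V} {w : G.Walk u v} (hw : w.IsPath) (n : ℕ) :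
    (w.mydrop n).IsPath := by
  induction w generalizing n with
  | nil => cases n <;> exact hw
  | cons h q ih =>
    cases n with
    | zero => exact hw
    | succ n => exact ih hw.of_cons n

lemma mem_edges_exists {u v : V} (w : G.Walk u v) {e : Sym2 V} (he : e ∈ w.edges) :
    ∃ t, t < w.length ∧ e = s(w.getVert t, w.getVert (t+1)) := by
  induction w with
  | nil => simp at he
  | cons h q ih =>
    simp only [edges_cons, List.mem_cons] at he
    rcases he with he | he
    · exact ⟨0, by simp, by simpa [getVert_cons_succ] using he⟩
    · obtain ⟨t, ht, he⟩ := ih he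
      exact ⟨t + 1, by simp [ht], by simpa [getVert_cons_succ] using he⟩

lemma edge_mem_of_lt_length {u v : V} (w : G.Walk u v) {t : ℕ} (ht : t < w.length) :
    s(w.getVert t, w.getVert (t+1)) ∈ w.edges := by
  induction w generalizing t with
  | nil => simp at ht
  | cons h q ih =>
    cases t with
    | zero => simp [getVert_cons_succ]
    | succ t =>
      simp only [length_cons, Nat.succ_lt_succ_iff] at ht
      simp only [edges_cons, List.mem_cons, getVert_cons_succ]
      exact Or.inr (ih ht)

lemma IsPath.getVert_injOn' {u v : V} {w : G.Walk u v} (hw : w.IsPath) :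
    ∀ i ≤ w.length, ∀ j ≤ w.length, w.getVert i = w.getVert j → i = j := by
  induction w with
  | nil => intro i hi j hj _; simp at hi hj; omega
  | cons h q ih =>
    intro i hi j hj hij
    rw [Walk.cons_isPath_iff] at hw
    cases i with
    | zero =>
      cases j with
      | zero => rfl
      | succ j =>
        exfalso
        simp only [getVert_zero, getVert_cons_succ] at hij
        exact hw.2 (mem_support_iff_exists_getVert.mpr ⟨j, hij.symm, by simpa using hj⟩)
    | succ i =>
      cases j with
      | zero =>
        exfalso
        simp only [getVert_zero, getVert_cons_succ] at hij
        exact hw.2 (mem_support_iff_exists_getVert.mpr ⟨i, hij, by simpa using hi⟩)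
      | succ j =>
        simp only [getVert_cons_succ] at hij
        have := ih hw.1 i (by simpa using hi) j (by simpa using hj) hij
        omega


def arcW {u v : V} (w : G.Walk u v) (i j : ℕ) (hij : i ≤ j) :
    G.Walk (w.getVert i) (w.getVert j) :=
  ((w.mydrop i).mytake (j - i)).copy rfl
    (by rw [mydrop_getVert, Nat.add_sub_cancel' hij])

lemma arcW_length {u v : V} (w : G.Walk u v) {i j : ℕ} (hij : i ≤ j) (hj : j ≤ w.length) :
    (w.arcW i j hij).length = j - i := by
  simp [arcW]; omega

lemma arcW_getVert {u v : V} (w : G.Walk u v) {i j : ℕ} (hij : i ≤ j) (t : ℕ) :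
    (w.arcW i j hij).getVert t = w.getVert (i + min t (j - i)) := by
  simp [arcW, mytake_getVert, mydrop_getVert]

lemma arcW_edges_subset {u v : V} (w : G.Walk u v) {i j : ℕ} (hij : i ≤ j) :
    (w.arcW i j hij).edges ⊆ w.edges := by
  simp only [arcW, edges_copy]
  exact fun e he => mydrop_edges_subset w i (mytake_edges_subset _ _ he)

lemma arcW_support_subset {u v : V} (w : G.Walk u v) {i j : ℕ} (hij : i ≤ j) :
    (w.arcW i j hij).support ⊆ w.support := by
  simp only [arcW, support_copy]
  exact fun x hx => mydrop_support_subset w i (mytake_support_subset _ _ hx)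

lemma IsPath.arcW {u v : V} {w : G.Walk u v} (hw : w.IsPath) {i j : ℕ} (hij : i ≤ j) :
    (w.arcW i j hij).IsPath := by
  simp only [Walk.arcW, isPath_copy]
  exact (hw.mydrop i).mytake _

lemma arcW_mem_support {u v : V} (w : G.Walk u v) {i j : ℕ} (hij : i ≤ j)
    (hj : j ≤ w.length) {x : V} :
    x ∈ (w.arcW i j hij).support ↔ ∃ t, i ≤ t ∧ t ≤ j ∧ w.getVert t = x := by
  constructor
  · intro hx
    obtain ⟨t, ht, hle⟩ := mem_support_iff_exists_getVert.mp hx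
    rw [arcW_getVert] at ht
    exact ⟨i + min t (j - i), by omega, by omega, ht⟩
  · rintro ⟨t, hit, htj, rfl⟩
    refine mem_support_iff_exists_getVert.mpr ⟨t - i, ?_, ?_⟩
    · rw [arcW_getVert]; congr 1; omega
    · rw [arcW_length w hij hj]; omega

lemma arcW_edge_mem {u v : V} (w : G.Walk u v) {i j t : ℕ} (hij : i ≤ j) (hj : j ≤ w.length)
    (hit : i ≤ t) (htj : t + 1 ≤ j) :
    s(w.getVert t, w.getVert (t+1)) ∈ (w.arcW i j hij).edges := by
  have hlen : (w.arcW i j hij).length = j - i := arcW_length w hij hj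
  have h1 : (w.arcW i j hij).getVert (t - i) = w.getVert t := by
    rw [arcW_getVert]; congr 1; omega
  have h2 : (w.arcW i j hij).getVert (t - i + 1) = w.getVert (t + 1) := by
    rw [arcW_getVert]; congr 1; omega
  have := edge_mem_of_lt_length (w.arcW i j hij) (t := t - i) (by omega)
  rwa [h1, h2] at this

end Walk

end SimpleGraph

namespace SimpleGraph
variable {V : Type*} (G : SimpleGraph V)

lemma walkDist_comm {a b : V} (w : G.Walk a b) (x y : V) :
    G.walkDist w x y = G.walkDist w y x := dist_comm

lemma walkDist_self {a b : V} (w : G.Walk a b) (x : V) : G.walkDist w x x = 0 := dist_self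

lemma walkDist_le_one {a b : V} (c : G.Walk a b) {x y : V}
    (hxy : s(x, y) ∈ c.edges) (hne : x ≠ y) : G.walkDist c x y ≤ 1 := by
  have hadj : (fromEdgeSet {e | e ∈ c.edges}).Adj x y := by
    rw [fromEdgeSet_adj]; exact ⟨hxy, hne⟩
  exact le_of_eq (dist_eq_one_iff_adj.mpr hadj)

lemma walkDist_path_eq {a b : V} {σ : G.Walk a b} (hσ : σ.IsPath) {i j : ℕ}
    (hij : i ≤ j) (hj : j ≤ σ.length) :
    G.walkDist σ (σ.getVert i) (σ.getVert j) = j - i := by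
  classical
  have Inj := hσ.getVert_injOn'
  set H := fromEdgeSet {e | e ∈ σ.edges} with hH
  have hsub : ∀ e ∈ (σ.arcW i j hij).edges, e ∈ H.edgeSet := by
    intro e he
    have h1 : e ∈ σ.edges := Walk.arcW_edges_subset σ hij he
    have h2 : e ∈ G.edgeSet := σ.edges_subset_edgeSet h1
    rw [hH, edgeSet_fromEdgeSet]
    exact ⟨h1, G.not_isDiag_of_mem_edgeSet h2⟩
  have hTlen : ((σ.arcW i j hij).transfer H hsub).length = j - i := by
    rw [Walk.length_transfer]
    exact Walk.arcW_length σ hij hj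
  have hle : G.walkDist σ (σ.getVert i) (σ.getVert j) ≤ j - i := by
    have h3 := H.dist_le ((σ.arcW i j hij).transfer H hsub)
    rw [hTlen] at h3
    exact h3
  have claim : ∀ (x y : V) (w : H.Walk x y) (ix iy : ℕ), ix ≤ σ.length → iy ≤ σ.length →
      σ.getVert ix = x → σ.getVert iy = y →
      iy ≤ ix + w.length ∧ ix ≤ iy + w.length := by
    intro x y w
    induction w with
    | nil =>
      intro ix iy hix hiy hx hy
      have := Inj ix hix iy hiy (hx.trans hy.symm)
      omega
    | @cons x z y ha w ih =>
      intro ix iy hix hiy hx hy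
      rw [hH, fromEdgeSet_adj] at ha
      have hmem : s(x, z) ∈ σ.edges := ha.1
      obtain ⟨t, ht, heq⟩ := σ.mem_edges_exists hmem
      rw [Sym2.eq_iff] at heq
      rcases heq with ⟨h1, h2⟩ | ⟨h1, h2⟩
      · have hixt : ix = t := Inj ix hix t (by omega) (by rw [hx]; exact h1)
        have := ih (t + 1) iy (by omega) hiy h2.symm hy
        simp only [Walk.length_cons]
        omega
      · have hixt : ix = t + 1 := Inj ix hix (t + 1) (by omega) (by rw [hx]; exact h1)
        have := ih t iy (by omega) hiy h2.symm hy
        simp only [Walk.length_cons]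
        omega
  have hreach : H.Reachable (σ.getVert i) (σ.getVert j) := ⟨(σ.arcW i j hij).transfer H hsub⟩
  obtain ⟨w, hw⟩ := hreach.exists_walk_length_eq_dist
  have hcl := claim _ _ w i j (by omega) hj rfl rfl
  rw [hw] at hcl
  have hge : j - i ≤ G.walkDist σ (σ.getVert i) (σ.getVert j) := by
    show j - i ≤ H.dist _ _
    omega
  omega

end SimpleGraph

open SimpleGraph in
/-- If `G` is `(k,1)`-chordal, then for every chordal `ab`-path `σ` with
`L(σ) ≥ k` and vertices `a', b'` of `σ` with `d_σ({a',b'},{a,b}) ≥ 2` and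
`d_σ(a',b') ≥ k - 4`, the restriction `σ'` of `σ` between `a'` and `b'` is an
`ab`-`N₁`-separator. -/
theorem chordal_implies_chordal_path_n1_separator {V : Type*} (G : SimpleGraph V)
    (hconn : G.Connected) (k : ℕ) (hch : G.KMChordal k 1) :
    ∀ (a b : V) (σ : G.Walk a b), G.IsChordalPath σ → k ≤ σ.length →
      ∀ (a' b' : V) (σ₁ : G.Walk a a') (σ₂ : G.Walk a' b') (σ₃ : G.Walk b' b),
        σ = σ₁.append (σ₂.append σ₃) →
        2 ≤ G.walkDist σ a a' → 2 ≤ G.walkDist σ a b' →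
        2 ≤ G.walkDist σ b a' → 2 ≤ G.walkDist σ b b' →
        k ≤ G.walkDist σ a' b' + 4 →
        G.NrSeparates {x | x ∈ σ₂.support} 1 a b := by
  intro a b σ hσch hσlen a' b' σ₁ σ₂ σ₃ hsplit h2aa h2ab h2ba h2bb hk4
  classical
  obtain ⟨hσp, hchord⟩ := hσch
  have Inj := hσp.getVert_injOn'
  set A := σ₁.length with hA
  set B := σ₁.length + σ₂.length with hBdef
  have hn : σ.length = σ₁.length + (σ₂.length + σ₃.length) := by
    rw [hsplit]; simp [Walk.length_append]
  have hgA : σ.getVert A = a' := by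
    rw [hsplit, Walk.getVert_append]
    rw [if_neg (lt_irrefl _), Nat.sub_self, Walk.getVert_zero]
  have hmid : ∀ t ≤ σ₂.length, σ.getVert (A + t) = σ₂.getVert t := by
    intro t ht
    rw [hsplit, Walk.getVert_append, if_neg (by omega), Walk.getVert_append]
    have h1 : A + t - σ₁.length = t := by omega
    rw [h1]
    by_cases h : t < σ₂.length
    · rw [if_pos h]
    · rw [if_neg h]
      have h2 : t = σ₂.length := by omega
      subst h2
      rw [Walk.getVert_length, Nat.sub_self, Walk.getVert_zero]
  have hgB : σ.getVert B = b' := by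
    have h := hmid σ₂.length le_rfl
    rw [Walk.getVert_length] at h
    exact h
  have hga : σ.getVert 0 = a := σ.getVert_zero
  have hgb : σ.getVert σ.length = b := σ.getVert_length
  have hSmem : ∀ s ∈ σ₂.support, ∃ m, A ≤ m ∧ m ≤ B ∧ σ.getVert m = s := by
    intro s hs
    obtain ⟨t, hts, htle⟩ := Walk.mem_support_iff_exists_getVert.mp hs
    exact ⟨A + t, by omega, by omega, by rw [hmid t htle, hts]⟩
  have hSmem' : ∀ m, A ≤ m → m ≤ B → σ.getVert m ∈ σ₂.support := by
    intro m h1 h2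
    refine Walk.mem_support_iff_exists_getVert.mpr ⟨m - A, ?_, by omega⟩
    have h3 := hmid (m - A) (by omega)
    rw [show A + (m - A) = m by omega] at h3
    exact h3.symm
  have hA2 : 2 ≤ A := by
    have h := G.walkDist_path_eq hσp (show 0 ≤ A by omega) (show A ≤ σ.length by omega)
    rw [hga, hgA] at h
    omega
  have hB2 : 2 ≤ B := by
    have h := G.walkDist_path_eq hσp (show 0 ≤ B by omega) (show B ≤ σ.length by omega)
    rw [hga, hgB] at h
    omega
  have hnA2 : A + 2 ≤ σ.length := by
    have h := G.walkDist_path_eq hσp (show A ≤ σ.length by omega) (le_refl σ.length)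
    rw [hgA, hgb] at h
    have hcm := G.walkDist_comm σ b a'
    omega
  have hnB2 : B + 2 ≤ σ.length := by
    have h := G.walkDist_path_eq hσp (show B ≤ σ.length by omega) (le_refl σ.length)
    rw [hgB, hgb] at h
    have hcm := G.walkDist_comm σ b b'
    omega
  have hkB : k ≤ B - A + 4 := by
    have h := G.walkDist_path_eq hσp (show A ≤ B by omega) (show B ≤ σ.length by omega)
    rw [hgA, hgB] at h
    omega
  have noadj : ∀ i j : ℕ, j ≤ σ.length → i + 2 ≤ j → ¬ G.Adj (σ.getVert i) (σ.getVert j) := by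
    intro i j hj h2 hadj
    have h1 := hchord (σ.getVert i) (Walk.mem_support_iff_exists_getVert.mpr ⟨i, rfl, by omega⟩)
      (σ.getVert j) (Walk.mem_support_iff_exists_getVert.mpr ⟨j, rfl, by omega⟩) hadj
    have h2' := G.walkDist_path_eq hσp (show i ≤ j by omega) hj
    omega
  refine ⟨?_, ?_, ?_⟩
  · intro s hs
    simp only [Set.mem_setOf_eq] at hs
    obtain ⟨m, hAm, hmB, hms⟩ := hSmem s hs
    by_contra hcon
    push_neg at hcon
    have h01 : G.dist a s = 0 ∨ G.dist a s = 1 := by omega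
    rcases h01 with h0 | h1
    · have heq : a = s := (hconn.dist_eq_zero_iff).mp h0
      rw [← hga, ← hms] at heq
      have := Inj 0 (by omega) m (by omega) heq
      omega
    · have hadj : G.Adj a s := dist_eq_one_iff_adj.mp h1
      rw [← hga, ← hms] at hadj
      exact noadj 0 m (by omega) (by omega) hadj
  · intro s hs
    simp only [Set.mem_setOf_eq] at hs
    obtain ⟨m, hAm, hmB, hms⟩ := hSmem s hs
    by_contra hcon
    push_neg at hcon
    have h01 : G.dist b s = 0 ∨ G.dist b s = 1 := by omega
    rcases h01 with h0 | h1
    · have heq : b = s := (hconn.dist_eq_zero_iff).mp h0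
      rw [← hgb, ← hms] at heq
      have := Inj σ.length (le_refl _) m (by omega) heq
      omega
    · have hadj : G.Adj b s := dist_eq_one_iff_adj.mp h1
      rw [← hgb, ← hms] at hadj
      exact noadj m σ.length (le_refl _) (by omega) hadj.symm
  · intro γ
    by_contra hcon
    push_neg at hcon
    have main : ∀ N : ℕ, ∀ i j : ℕ, ∀ η : G.Walk (σ.getVert i) (σ.getVert j),
        (j - i) + η.length ≤ N → i < A → B < j → j ≤ σ.length → η.IsPath →
        (∀ x ∈ η.support, x ≠ σ.getVert i → x ≠ σ.getVert j →
          ∀ s ∈ σ₂.support, 1 < G.dist x s) →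
        (∀ x ∈ η.support, x ∈ σ.support → x = σ.getVert i ∨ x = σ.getVert j) → False := by
      intro N
      induction N with
      | zero => intro i j η hm hiA hBj hjn _ _ _; omega
      | succ N ih =>
        intro i j η hm hiA hBj hjn hηp havoid hdisj
        have hij : i ≤ j := by omega
        have hji2 : i + 2 ≤ j := by omega
        have InjE := hηp.getVert_injOn'
        have hηlen1 : 1 ≤ η.length := by
          by_contra hcc
          push_neg at hcc
          have e1 : η.getVert 0 = σ.getVert j := η.getVert_of_length_le (by omega)
          have e2 : η.getVert 0 = σ.getVert i := η.getVert_zero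
          have := Inj i (by omega) j (by omega) (e2.symm.trans e1)
          omega
        have harclen : (σ.arcW i j hij).length = j - i := Walk.arcW_length σ hij hjn
        set c : G.Walk (σ.getVert i) (σ.getVert i) := (σ.arcW i j hij).append η.reverse with hc
        have hclen : c.length = (j - i) + η.length := by
          rw [hc, Walk.length_append, harclen, Walk.length_reverse]
        have harcmem : ∀ x : V, x ∈ (σ.arcW i j hij).support ↔
            ∃ t, i ≤ t ∧ t ≤ j ∧ σ.getVert t = x := fun x => Walk.arcW_mem_support σ hij hjn
        have harcsup : (σ.arcW i j hij).support ⊆ σ.support := Walk.arcW_support_subset σ hij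
        have hcsup : ∀ x : V, x ∈ c.support ↔ x ∈ (σ.arcW i j hij).support ∨ x ∈ η.support := by
          intro x
          rw [hc, Walk.mem_support_append_iff]
          simp [Walk.support_reverse]
        have hcedge : ∀ e : Sym2 V, e ∈ c.edges ↔ e ∈ (σ.arcW i j hij).edges ∨ e ∈ η.edges := by
          intro e
          rw [hc, Walk.edges_append]
          simp [Walk.edges_reverse]
        have humem : σ.getVert i ∈ η.support :=
          Walk.mem_support_iff_exists_getVert.mpr ⟨0, η.getVert_zero, by omega⟩
        have hvmem : σ.getVert j ∈ η.support :=
          Walk.mem_support_iff_exists_getVert.mpr ⟨η.length, η.getVert_length, le_refl _⟩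
        have huarc : σ.getVert i ∈ (σ.arcW i j hij).support :=
          (harcmem _).mpr ⟨i, le_refl _, hij, rfl⟩
        have hvarc : σ.getVert j ∈ (σ.arcW i j hij).support :=
          (harcmem _).mpr ⟨j, hij, le_refl _, rfl⟩
        have hcyc : c.IsCycle := by
          rw [Walk.isCycle_def]
          refine ⟨?_, ?_, ?_⟩
          · rw [Walk.isTrail_def, hc, Walk.edges_append, List.nodup_append]
            refine ⟨(hσp.arcW hij).edges_nodup, ?_, ?_⟩
            · rw [Walk.edges_reverse, List.nodup_reverse]
              exact hηp.edges_nodup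
            · intro e he1 e' he2 hee
              subst hee
              rw [Walk.edges_reverse, List.mem_reverse] at he2
              obtain ⟨t, ht, rfl⟩ := Walk.mem_edges_exists _ he1
              rw [harclen] at ht
              have e1 : (σ.arcW i j hij).getVert t = σ.getVert (i + t) := by
                rw [Walk.arcW_getVert]
                congr 1
                omega
              have e2 : (σ.arcW i j hij).getVert (t + 1) = σ.getVert (i + t + 1) := by
                rw [Walk.arcW_getVert]
                congr 1
                omega
              rw [e1, e2] at he2
              have hx1 : σ.getVert (i + t) ∈ η.support :=
                Walk.fst_mem_support_of_mem_edges η he2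
              have hx2 : σ.getVert (i + t + 1) ∈ η.support :=
                Walk.snd_mem_support_of_mem_edges η he2
              have hd1 := hdisj _ hx1
                (Walk.mem_support_iff_exists_getVert.mpr ⟨i + t, rfl, by omega⟩)
              have hd2 := hdisj _ hx2
                (Walk.mem_support_iff_exists_getVert.mpr ⟨i + t + 1, rfl, by omega⟩)
              rcases hd1 with h1 | h1 <;> rcases hd2 with h2 | h2
              · have := Inj (i + t + 1) (by omega) i (by omega) h2
                omega
              · have e3 := Inj (i + t) (by omega) i (by omega) h1
                have e4 := Inj (i + t + 1) (by omega) j (by omega) h2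
                omega
              · have := Inj (i + t) (by omega) j (by omega) h1
                omega
              · have := Inj (i + t) (by omega) j (by omega) h1
                omega
          · intro hnil
            have h5 := congrArg Walk.length hnil
            rw [hclen] at h5
            simp only [Walk.length_nil] at h5
            omega
          · rw [hc, Walk.tail_support_append, List.nodup_append]
            refine ⟨List.Sublist.nodup (List.tail_sublist _) (hσp.arcW hij).support_nodup,
              List.Sublist.nodup (List.tail_sublist _) (hηp.reverse).support_nodup, ?_⟩
            intro x hx1 x' hx2 hxx
            subst hxx
            have hxarc : x ∈ (σ.arcW i j hij).support := List.mem_of_mem_tail hx1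
            have hxu : x ≠ σ.getVert i := by
              intro h
              subst h
              have h6 := (hσp.arcW hij).support_nodup
              rw [Walk.support_eq_cons] at h6
              exact (List.nodup_cons.mp h6).1 hx1
            have hxη : x ∈ η.support := by
              have h7 := List.mem_of_mem_tail hx2
              rw [Walk.support_reverse, List.mem_reverse] at h7
              exact h7
            have hxv : x ≠ σ.getVert j := by
              intro h
              subst h
              have hnd := (hηp.reverse).support_nodup
              rw [Walk.support_eq_cons] at hnd
              exact (List.nodup_cons.mp hnd).1 hx2
            rcases hdisj x hxη (harcsup hxarc) with h | h
            · exact hxu h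
            · exact hxv h
        have hklen : k ≤ c.length := by
          rw [hclen]
          by_cases hcase : i + 2 ≤ A ∨ B + 2 ≤ j ∨ k ≤ 3
          · omega
          · push_neg at hcase
            have hL2 : 2 ≤ η.length := by
              by_contra hL
              push_neg at hL
              have hadj : G.Adj (η.getVert 0) (η.getVert 1) :=
                η.adj_getVert_succ (by omega)
              rw [η.getVert_zero] at hadj
              have h1 : η.getVert 1 = σ.getVert j := η.getVert_of_length_le (by omega)
              rw [h1] at hadj
              exact noadj i j hjn (by omega) hadj
            omega
        obtain ⟨p, q, τ, ⟨hτpath, hpc, hqc, hlt⟩, hτ1⟩ := hch (σ.getVert i) c hcyc hklen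
        rcases τ with _ | ⟨hadj, τ'⟩
        · rw [Walk.length_nil, G.walkDist_self c p] at hlt
          omega
        rcases τ' with _ | ⟨hadj2, τ''⟩
        rotate_left
        · rw [Walk.length_cons, Walk.length_cons] at hτ1
          omega
        have hlt1 : 1 < G.walkDist c p q := by
          rw [Walk.length_cons, Walk.length_nil] at hlt
          omega
        have hne : p ≠ q := by
          intro h
          subst h
          rw [G.walkDist_self c p] at hlt1
          omega
        have caseA : ∀ x y : V, G.Adj x y → 1 < G.walkDist c x y →
            x ∈ (σ.arcW i j hij).support → y ∈ (σ.arcW i j hij).support → False := by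
          intro x y hxy hw hxs hys
          obtain ⟨mx, himx, hmxj, hmx⟩ := (harcmem x).mp hxs
          obtain ⟨my, himy, hmyj, hmy⟩ := (harcmem y).mp hys
          subst hmx
          subst hmy
          rcases Nat.lt_trichotomy mx my with h | h | h
          · rcases Nat.lt_or_ge (mx + 1) my with hgap | hgap
            · exact noadj mx my (by omega) (by omega) hxy
            · have hedge : s(σ.getVert mx, σ.getVert my) ∈ (σ.arcW i j hij).edges := by
                have h8 := Walk.arcW_edge_mem σ hij hjn himx (show mx + 1 ≤ j by omega)
                rwa [show mx + 1 = my by omega] at h8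
              have := G.walkDist_le_one c ((hcedge _).mpr (Or.inl hedge)) hxy.ne
              omega
          · subst h
            rw [G.walkDist_self c] at hw
            omega
          · rcases Nat.lt_or_ge (my + 1) mx with hgap | hgap
            · exact noadj my mx (by omega) (by omega) hxy.symm
            · have hedge : s(σ.getVert my, σ.getVert mx) ∈ (σ.arcW i j hij).edges := by
                have h8 := Walk.arcW_edge_mem σ hij hjn himy (show my + 1 ≤ j by omega)
                rwa [show my + 1 = mx by omega] at h8
              have h9 : s(σ.getVert mx, σ.getVert my) ∈ c.edges := by
                rw [Sym2.eq_swap]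
                exact (hcedge _).mpr (Or.inl hedge)
              have := G.walkDist_le_one c h9 hxy.ne
              omega
        have caseB : ∀ x y : V, G.Adj x y → 1 < G.walkDist c x y →
            x ∈ η.support → y ∈ η.support → False := by
          intro x y hxy hw hxs hys
          obtain ⟨sx, hsx, hsxle⟩ := Walk.mem_support_iff_exists_getVert.mp hxs
          obtain ⟨sy, hsy, hsyle⟩ := Walk.mem_support_iff_exists_getVert.mp hys
          subst hsx
          subst hsy
          have key : ∀ s1 s2 : ℕ, s1 < s2 → s2 ≤ η.length →
              G.Adj (η.getVert s1) (η.getVert s2) →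
              1 < G.walkDist c (η.getVert s1) (η.getVert s2) → False := by
            intro s1 s2 h12 h2le hA' hw'
            rcases Nat.lt_or_ge (s1 + 1) s2 with hgap | hgap
            · set η' : G.Walk (σ.getVert i) (σ.getVert j) :=
                (η.mytake s1).append (Walk.cons hA' (η.mydrop s2)) with hη'
              have hsupp : ∀ z : V, z ∈ η'.support → z ∈ η.support := by
                intro z hz
                rw [hη', Walk.mem_support_append_iff] at hz
                rcases hz with hz | hz
                · exact Walk.mytake_support_subset η s1 hz
                · rw [Walk.support_cons, List.mem_cons] at hz
                  rcases hz with hz | hz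
                  · rw [hz]
                    exact Walk.mem_support_iff_exists_getVert.mpr ⟨s1, rfl, by omega⟩
                  · exact Walk.mydrop_support_subset η s2 hz
              have hdisj2 : ∀ z : V, z ∈ (η.mytake s1).support →
                  z ∈ (η.mydrop s2).support → False := by
                intro z hz1 hz2
                obtain ⟨t1, ht1, ht1le⟩ := Walk.mem_support_iff_exists_getVert.mp hz1
                obtain ⟨t2, ht2, ht2le⟩ := Walk.mem_support_iff_exists_getVert.mp hz2
                rw [Walk.mytake_getVert] at ht1
                rw [Walk.mydrop_getVert] at ht2
                rw [Walk.mytake_length] at ht1le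
                rw [Walk.mydrop_length] at ht2le
                have := InjE (min t1 s1) (by omega) (s2 + t2) (by omega)
                  (ht1.trans ht2.symm)
                omega
              have hη'p : η'.IsPath := by
                rw [Walk.isPath_def, hη', Walk.support_append, Walk.support_cons,
                  List.tail_cons, List.nodup_append]
                exact ⟨(hηp.mytake s1).support_nodup, (hηp.mydrop s2).support_nodup,
                  fun z hz1 z' hz2 hzz => hdisj2 z hz1 (hzz ▸ hz2)⟩
              have hη'len : η'.length = s1 + 1 + (η.length - s2) := by
                rw [hη', Walk.length_append, Walk.length_cons, Walk.mytake_length,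
                  Walk.mydrop_length]
                omega
              exact ih i j η' (by omega) hiA hBj hjn hη'p
                (fun z hz h1 h2 s hs => havoid z (hsupp z hz) h1 h2 s hs)
                (fun z hz hzσ => hdisj z (hsupp z hz) hzσ)
            · have hedge : s(η.getVert s1, η.getVert s2) ∈ η.edges := by
                have h8 := η.edge_mem_of_lt_length (t := s1) (by omega)
                rwa [show s1 + 1 = s2 by omega] at h8
              have := G.walkDist_le_one c ((hcedge _).mpr (Or.inr hedge)) hA'.ne
              omega
          rcases Nat.lt_trichotomy sx sy with h | h | h
          · exact key sx sy h hsyle hxy hw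
          · subst h
            rw [G.walkDist_self c] at hw
            omega
          · have hw' : 1 < G.walkDist c (η.getVert sy) (η.getVert sx) := by
              rw [G.walkDist_comm]
              exact hw
            exact key sy sx h hsxle hxy.symm hw'
        have caseM : ∀ x y : V, G.Adj x y → x ∈ η.support → x ∉ (σ.arcW i j hij).support →
            y ∈ (σ.arcW i j hij).support → y ∉ η.support → False := by
          intro x y hxy hxη hxarc hyarc hyη
          have hxu : x ≠ σ.getVert i := fun h => hxarc (h ▸ huarc)
          have hxv : x ≠ σ.getVert j := fun h => hxarc (h ▸ hvarc)
          obtain ⟨my, himy, hmyj, hmy⟩ := (harcmem y).mp hyarc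
          have hmyi : my ≠ i := by
            intro h
            subst h
            exact hyη (hmy ▸ humem)
          have hmyj2 : my ≠ j := by
            intro h
            subst h
            exact hyη (hmy ▸ hvmem)
          obtain ⟨sx, hsx, hsxle⟩ := Walk.mem_support_iff_exists_getVert.mp hxη
          have hsx0 : sx ≠ 0 := by
            intro h
            rw [h, η.getVert_zero] at hsx
            exact hxu hsx.symm
          have hsxL : sx ≠ η.length := by
            intro h
            rw [h, η.getVert_length] at hsx
            exact hxv hsx.symm
          rcases Nat.lt_or_ge my A with hmyA | hmyA
          · have hadj' : G.Adj (σ.getVert my) x := by rw [hmy]; exact hxy.symm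
            set η' : G.Walk (σ.getVert my) (σ.getVert j) :=
              Walk.cons hadj' ((η.mydrop sx).copy hsx rfl) with hη'
            have hin : ∀ z : V, z ∈ ((η.mydrop sx).copy hsx rfl).support →
                z ∈ η.support ∧ z ≠ σ.getVert i := by
              intro z hz
              rw [Walk.support_copy] at hz
              obtain ⟨t, ht, htle⟩ := Walk.mem_support_iff_exists_getVert.mp hz
              rw [Walk.mydrop_getVert] at ht
              rw [Walk.mydrop_length] at htle
              refine ⟨Walk.mydrop_support_subset η sx hz, ?_⟩
              intro hzz
              have h7 : η.getVert (sx + t) = η.getVert 0 := by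
                rw [η.getVert_zero, ht]
                exact hzz
              have := InjE (sx + t) (by omega) 0 (by omega) h7
              omega
            have hη'p : η'.IsPath := by
              rw [hη', Walk.cons_isPath_iff]
              refine ⟨by rw [Walk.isPath_copy]; exact hηp.mydrop sx, ?_⟩
              intro hmem
              exact hyη (hmy ▸ (hin _ hmem).1)
            have hη'len : η'.length = 1 + (η.length - sx) := by
              rw [hη', Walk.length_cons, Walk.length_copy, Walk.mydrop_length]
              omega
            refine ih my j η' (by omega) hmyA hBj hjn hη'p ?_ ?_
            · intro z hz hz1 hz2 s hs
              rw [hη', Walk.support_cons, List.mem_cons] at hz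
              rcases hz with hz | hz
              · exact absurd hz hz1
              · exact havoid z (hin z hz).1 (hin z hz).2 hz2 s hs
            · intro z hz hzσ
              rw [hη', Walk.support_cons, List.mem_cons] at hz
              rcases hz with hz | hz
              · exact Or.inl hz
              · rcases hdisj z (hin z hz).1 hzσ with h | h
                · exact absurd h (hin z hz).2
                · exact Or.inr h
          · rcases le_or_gt my B with hmyB | hmyB
            · have hyS : y ∈ σ₂.support := by rw [← hmy]; exact hSmem' my hmyA hmyB
              have h5 := havoid x hxη hxu hxv y hyS
              have hd1 : G.dist x y = 1 := dist_eq_one_iff_adj.mpr hxy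
              omega
            · have hadj' : G.Adj x (σ.getVert my) := by rw [hmy]; exact hxy
              set η' : G.Walk (σ.getVert i) (σ.getVert my) :=
                ((η.mytake sx).copy rfl hsx).append (Walk.cons hadj' Walk.nil) with hη'
              have hin : ∀ z : V, z ∈ (η.mytake sx).support →
                  z ∈ η.support ∧ z ≠ σ.getVert j := by
                intro z hz
                obtain ⟨t, ht, htle⟩ := Walk.mem_support_iff_exists_getVert.mp hz
                rw [Walk.mytake_getVert] at ht
                rw [Walk.mytake_length] at htle
                refine ⟨Walk.mytake_support_subset η sx hz, ?_⟩
                intro hzz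
                have h7 : η.getVert (min t sx) = η.getVert η.length := by
                  rw [η.getVert_length, ht]
                  exact hzz
                have := InjE (min t sx) (by omega) η.length (le_refl _) h7
                omega
              have hsupp2 : η'.support = (η.mytake sx).support ++ [σ.getVert my] := by
                rw [hη', Walk.support_append, Walk.support_copy, Walk.support_cons,
                  List.tail_cons, Walk.support_nil]
              have hη'p : η'.IsPath := by
                rw [Walk.isPath_def, hsupp2, List.nodup_append]
                refine ⟨(hηp.mytake sx).support_nodup, List.nodup_singleton _, ?_⟩
                intro z hz1 z' hz2 hzz
                rw [List.mem_singleton] at hz2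
                subst hz2
                subst hzz
                exact hyη (hmy ▸ (hin _ hz1).1)
              have hη'len : η'.length = sx + 1 := by
                rw [hη', Walk.length_append, Walk.length_copy, Walk.length_cons,
                  Walk.length_nil, Walk.mytake_length]
                omega
              refine ih i my η' (by omega) hiA hmyB (by omega) hη'p ?_ ?_
              · intro z hz hz1 hz2 s hs
                rw [hsupp2, List.mem_append, List.mem_singleton] at hz
                rcases hz with hz | hz
                · exact havoid z (hin z hz).1 hz1 (hin z hz).2 s hs
                · exact absurd hz hz2
              · intro z hz hzσ
                rw [hsupp2, List.mem_append, List.mem_singleton] at hz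
                rcases hz with hz | hz
                · rcases hdisj z (hin z hz).1 hzσ with h | h
                  · exact Or.inl h
                  · exact absurd h (hin z hz).2
                · exact Or.inr hz
        by_cases hparc : p ∈ (σ.arcW i j hij).support
        · by_cases hqarc : q ∈ (σ.arcW i j hij).support
          · exact caseA p q hadj hlt1 hparc hqarc
          · have hqη : q ∈ η.support := by
              rcases (hcsup q).mp hqc with h | h
              · exact absurd h hqarc
              · exact h
            by_cases hpη : p ∈ η.support
            · exact caseB p q hadj hlt1 hpη hqη
            · exact caseM q p hadj.symm hqη hqarc hparc hpη
        · have hpη : p ∈ η.support := by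
            rcases (hcsup p).mp hpc with h | h
            · exact absurd h hparc
            · exact h
          by_cases hqη : q ∈ η.support
          · exact caseB p q hadj hlt1 hpη hqη
          · have hqarc : q ∈ (σ.arcW i j hij).support := by
              rcases (hcsup q).mp hqc with h | h
              · exact h
              · exact absurd h hqη
            exact caseM p q hadj hpη hparc hqarc hqη
    have main2 : ∀ N : ℕ, ∀ i j : ℕ, ∀ η : G.Walk (σ.getVert i) (σ.getVert j),
        η.length ≤ N → i < A → B < j → j ≤ σ.length → η.IsPath →
        (∀ x ∈ η.support, ∀ s ∈ σ₂.support, 1 < G.dist x s) → False := by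
      intro N
      induction N with
      | zero =>
        intro i j η hm hiA hBj hjn _ _
        have e1 : η.getVert 0 = σ.getVert j := η.getVert_of_length_le (by omega)
        have e2 : η.getVert 0 = σ.getVert i := η.getVert_zero
        have := Inj i (by omega) j hjn (e2.symm.trans e1)
        omega
      | succ N ih =>
        intro i j η hm hiA hBj hjn hηp hav
        by_cases hex : ∃ x ∈ η.support, x ∈ σ.support ∧ x ≠ σ.getVert i ∧ x ≠ σ.getVert j
        · obtain ⟨x, hxη, hxσ, hxu, hxv⟩ := hex
          have InjE := hηp.getVert_injOn'
          obtain ⟨sx, hsx, hsxle⟩ := Walk.mem_support_iff_exists_getVert.mp hxη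
          obtain ⟨m, hmx, hmle⟩ := Walk.mem_support_iff_exists_getVert.mp hxσ
          have hsx0 : sx ≠ 0 := by
            intro h
            rw [h, η.getVert_zero] at hsx
            exact hxu hsx.symm
          have hsxL : sx ≠ η.length := by
            intro h
            rw [h, η.getVert_length] at hsx
            exact hxv hsx.symm
          rcases Nat.lt_or_ge m A with hmA | hmA
          · have h9 : η.getVert sx = σ.getVert m := by rw [hsx, hmx]
            exact ih m j ((η.mydrop sx).copy h9 rfl)
              (by rw [Walk.length_copy, Walk.mydrop_length]; omega)
              hmA hBj hjn (by rw [Walk.isPath_copy]; exact hηp.mydrop sx)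
              (fun z hz s hs => hav z (by
                rw [Walk.support_copy] at hz
                exact Walk.mydrop_support_subset η sx hz) s hs)
          · rcases le_or_gt m B with hmB | hmB
            · have hxS : x ∈ σ₂.support := by rw [← hmx]; exact hSmem' m hmA hmB
              have h5 := hav x hxη x hxS
              have h0 : G.dist x x = 0 := by simp
              omega
            · have h9 : η.getVert sx = σ.getVert m := by rw [hsx, hmx]
              exact ih i m ((η.mytake sx).copy rfl h9)
                (by rw [Walk.length_copy, Walk.mytake_length]; omega)
                hiA hmB hmle (by rw [Walk.isPath_copy]; exact hηp.mytake sx)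
                (fun z hz s hs => hav z (by
                  rw [Walk.support_copy] at hz
                  exact Walk.mytake_support_subset η sx hz) s hs)
        · push_neg at hex
          exact main ((j - i) + η.length) i j η (le_refl _) hiA hBj hjn hηp
            (fun x hx _ _ s hs => hav x hx s hs)
            (fun x hx hxσ => by
              by_cases h : x = σ.getVert i
              · exact Or.inl h
              · exact Or.inr (hex x hx hxσ h))
    exact main2 γ.bypass.length 0 σ.length (γ.bypass.copy hga.symm hgb.symm)
      (by simp) (by omega) (by omega) (le_refl _)
      (by rw [Walk.isPath_copy]; exact Walk.bypass_isPath γ)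
      (fun x hx s hs => by
        rw [Walk.support_copy] at hx
        exact hcon x (Walk.support_bypass_subset γ hx) s hs)
end

section
/- Given a graph G, geodesics between vertices are stable with some constant if and only if there is a constant k ∈ ℕ such that for every pair of vertices a,b with d(a,b) ≥ 2k+2, every geodesic [ab], and every vertex v ∈ [ab] with d(v,{a,b}) > k, the vertex v is ab-N_k-obstructing (every geodesic from a to b intersects N_k(v)). -/
namespace SimpleGraph

variable {V : Type*} (G : SimpleGraph V)

/-- The cycle `c` is a bigon: it is formed by two geodesics with the same endpoints. -/
def IsBigon {v : V} (c : G.Walk v v) : Prop :=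
  ∃ (y : V) (p q : G.Walk v y), G.IsGeodesic p ∧ G.IsGeodesic q ∧ c = p.append q.reverse

/-- Geodesics (between vertices) are stable with constant `R`: any two geodesics with
the same endpoints are at Hausdorff distance at most `R`. -/
def GeodesicsStable (R : ℝ) : Prop :=
  ∀ (a b : V) (p q : G.Walk a b), G.IsGeodesic p → G.IsGeodesic q →
    (∀ x ∈ p.support, ∃ y ∈ q.support, (G.dist x y : ℝ) ≤ R) ∧
    (∀ y ∈ q.support, ∃ x ∈ p.support, (G.dist x y : ℝ) ≤ R)

end SimpleGraph

/-- Geodesics between vertices are stable (for some constant) iff there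
is `k ∈ ℕ` such that for all vertices `a,b` with `d(a,b) ≥ 2k+2`, every geodesic
`[ab]` and every vertex `v ∈ [ab]` with `d(v,{a,b}) > k`, the vertex `v` is
`ab`-`N_k`-obstructing. -/
theorem geodesics_stable_iff_obstructing {V : Type*} (G : SimpleGraph V)
    (hconn : G.Connected) :
    (∃ R : ℝ, 0 ≤ R ∧ G.GeodesicsStable R) ↔
      (∃ k : ℕ, ∀ a b : V, 2 * k + 2 ≤ G.dist a b →
        ∀ p : G.Walk a b, G.IsGeodesic p →
          ∀ v ∈ p.support, k < G.dist v a → k < G.dist v b →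
            ∀ γ : G.Walk a b, G.IsGeodesic γ →
              ∃ w ∈ γ.support, G.dist w v ≤ k) := by
  classical
  constructor
  · rintro ⟨R, hR0, hst⟩
    refine ⟨⌈R⌉₊, fun a b _ p hp v hv _ _ γ hγ => ?_⟩
    obtain ⟨y, hy, hle⟩ := (hst a b p γ hp hγ).1 v hv
    refine ⟨y, hy, ?_⟩
    rw [G.dist_comm]
    exact_mod_cast hle.trans (Nat.le_ceil R)
  · rintro ⟨k, hk⟩
    refine ⟨2 * k + 2, by positivity, fun a b p q hp hq => ?_⟩
    have key : ∀ (p q : G.Walk a b), G.IsGeodesic p → G.IsGeodesic q →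
        ∀ x ∈ p.support, ∃ y ∈ q.support, (G.dist x y : ℝ) ≤ 2 * k + 2 := by
      intro p q hp hq x hx
      have hkcast : (k : ℝ) ≤ 2 * k + 2 := by
        have : (k : ℝ) ≥ 0 := Nat.cast_nonneg k
        linarith
      by_cases hab : 2 * k + 2 ≤ G.dist a b
      · by_cases hda : G.dist x a ≤ k
        · refine ⟨a, q.start_mem_support, le_trans ?_ hkcast⟩
          exact_mod_cast hda
        · by_cases hdb : G.dist x b ≤ k
          · refine ⟨b, q.end_mem_support, le_trans ?_ hkcast⟩
            exact_mod_cast hdb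
          · obtain ⟨w, hw, hwle⟩ := hk a b hab p hp x hx (not_le.mp hda)
              (not_le.mp hdb) q hq
            refine ⟨w, hw, le_trans ?_ hkcast⟩
            rw [G.dist_comm]
            exact_mod_cast hwle
      · refine ⟨a, q.start_mem_support, ?_⟩
        have h1 : G.dist x a ≤ p.length := by
          calc G.dist x a ≤ (p.takeUntil x hx).reverse.length := G.dist_le _
            _ = (p.takeUntil x hx).length := (p.takeUntil x hx).length_reverse
            _ ≤ p.length := p.length_takeUntil_le hx
        have h2 : p.length = G.dist a b := hp
        have : G.dist x a ≤ 2 * k + 2 := by omega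
        exact_mod_cast this
    exact ⟨key p q hp hq, fun y hy => by
      obtain ⟨x, hx, h⟩ := key q p hq hp y hy
      exact ⟨x, hx, by rwa [G.dist_comm]⟩⟩
end

section
/- If G is (k/4)-densely (k,m)-chordal on the family of cycles that are bigons formed by two geodesics between vertices, then for every pair of vertices a,b with d(a,b) ≥ k/2 + 4, every geodesic [ab], and every vertex v₀ ∈ [ab] with d(v₀,{a,b}) ≥ k/4 + 1, the vertex v₀ is ab-N_k-obstructing: every geodesic from a to b intersects the closed k-neighborhood of v₀. -/
section ObstructingHelpers

open SimpleGraph Walk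

variable {V : Type*} {G : SimpleGraph V}

private lemma geo_split [DecidableEq V] (hconn : G.Connected) {a b u : V} (p : G.Walk a b)
    (hp : p.length = G.dist a b) (hu : u ∈ p.support) :
    (p.takeUntil u hu).length = G.dist a u ∧ (p.dropUntil u hu).length = G.dist u b ∧
      G.dist a u + G.dist u b = G.dist a b := by
  have h1 : G.dist a u ≤ (p.takeUntil u hu).length := SimpleGraph.dist_le _
  have h2 : G.dist u b ≤ (p.dropUntil u hu).length := SimpleGraph.dist_le _
  have h3 : (p.takeUntil u hu).length + (p.dropUntil u hu).length = p.length := by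
    have := congrArg Walk.length (p.take_spec hu)
    rwa [Walk.length_append] at this
  have h4 : G.dist a b ≤ G.dist a u + G.dist u b := hconn.dist_triangle
  omega

private lemma pos_inj [DecidableEq V] (hconn : G.Connected) {a b u w : V} (p : G.Walk a b)
    (hp : p.length = G.dist a b) (hu : u ∈ p.support) (hw : w ∈ p.support)
    (h : G.dist a u = G.dist a w) : u = w := by
  have hsum := geo_split hconn p hp hu
  have hw' : w ∈ ((p.takeUntil u hu).append (p.dropUntil u hu)).support := by
    rw [p.take_spec hu]; exact hw
  rcases (Walk.mem_support_append_iff _ _).1 hw' with h1 | h2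
  · have hx := (geo_split hconn _ hsum.1 h1).2.2
    have h0 : G.dist w u = 0 := by omega
    exact ((hconn w u).dist_eq_zero_iff.1 h0).symm
  · have hs2 := (geo_split hconn _ hsum.2.1 h2).2.2
    have hsw := (geo_split hconn p hp hw).2.2
    have h0 : G.dist u w = 0 := by omega
    exact (hconn u w).dist_eq_zero_iff.1 h0

private lemma geo_isPath [DecidableEq V] (hconn : G.Connected) : ∀ {a b : V} (p : G.Walk a b),
    p.length = G.dist a b → p.IsPath := by
  intro a b p
  induction p with
  | nil => intro _; exact Walk.IsPath.nil
  | @cons a c b hac q ih =>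
    intro hl
    have h1 : G.dist c b ≤ q.length := SimpleGraph.dist_le q
    have h2 : G.dist a b ≤ G.dist a c + G.dist c b := hconn.dist_triangle
    have h3 : G.dist a c ≤ 1 := SimpleGraph.dist_le (Walk.cons hac Walk.nil)
    have hl' : q.length + 1 = G.dist a b := by simpa using hl
    have hq : q.length = G.dist c b := by omega
    refine (ih hq).cons ?_
    intro hmem
    have := (geo_split hconn q hq hmem).2.2
    omega

private lemma exists_seg [DecidableEq V] (hconn : G.Connected) {s t u w : V} (P : G.Walk s t)
    (hP : P.length = G.dist s t) (hu : u ∈ P.support) (hw : w ∈ P.support) :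
    ∃ σ : G.Walk u w, σ.length = G.dist u w ∧ ∀ e ∈ σ.edges, e ∈ P.edges := by
  have hsplit := geo_split hconn P hP hu
  have hw' : w ∈ ((P.takeUntil u hu).append (P.dropUntil u hu)).support := by
    rw [P.take_spec hu]; exact hw
  rcases (Walk.mem_support_append_iff _ _).1 hw' with h1 | h2
  · have hd := (geo_split hconn _ hsplit.1 h1).2.1
    refine ⟨((P.takeUntil u hu).dropUntil w h1).reverse, ?_, ?_⟩
    · rw [Walk.length_reverse, hd, SimpleGraph.dist_comm]
    · intro e he
      rw [Walk.edges_reverse, List.mem_reverse] at he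
      exact P.edges_takeUntil_subset hu (Walk.edges_dropUntil_subset _ h1 he)
  · have hd := (geo_split hconn _ hsplit.2.1 h2).1
    refine ⟨(P.dropUntil u hu).takeUntil w h2, hd, ?_⟩
    intro e he
    exact P.edges_dropUntil_subset hu (Walk.edges_takeUntil_subset _ h2 he)

private lemma walk_edge_mem_edgeSet {v : V} (c : G.Walk v v) {u w : V} (σ : G.Walk u w)
    (hσ : ∀ e ∈ σ.edges, e ∈ c.edges) :
    ∀ e ∈ σ.edges, e ∈ (SimpleGraph.fromEdgeSet {e | e ∈ c.edges}).edgeSet := by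
  intro e he
  rw [SimpleGraph.edgeSet_fromEdgeSet]
  refine ⟨hσ e he, ?_⟩
  exact SimpleGraph.not_isDiag_of_mem_edgeSet G (σ.edges_subset_edgeSet he)

private lemma walkDist_le_of_seg {v u w : V} (c : G.Walk v v) (σ : G.Walk u w)
    (hσ : ∀ e ∈ σ.edges, e ∈ c.edges) : G.walkDist c u w ≤ σ.length := by
  have h := walk_edge_mem_edgeSet c σ hσ
  have h2 := SimpleGraph.dist_le (σ.transfer _ h)
  rw [Walk.length_transfer] at h2
  unfold SimpleGraph.walkDist
  exact h2

private lemma dist_le_walkDist [DecidableEq V] {v u w : V} (c : G.Walk v v)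
    (hu : u ∈ c.support) (hw : w ∈ c.support) : G.dist u w ≤ G.walkDist c u w := by
  have hc : ∀ e ∈ c.edges, e ∈ (SimpleGraph.fromEdgeSet {e | e ∈ c.edges}).edgeSet :=
    walk_edge_mem_edgeSet c c (fun _ he => he)
  have hle : SimpleGraph.fromEdgeSet {e | e ∈ c.edges} ≤ G := by
    intro x y hxy
    rw [SimpleGraph.fromEdgeSet_adj] at hxy
    exact c.adj_of_mem_edges hxy.1
  have hu' : u ∈ (c.transfer _ hc).support := by rw [Walk.support_transfer]; exact hu
  have hw' : w ∈ (c.transfer _ hc).support := by rw [Walk.support_transfer]; exact hw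
  have hreach : (SimpleGraph.fromEdgeSet {e | e ∈ c.edges}).Reachable u w :=
    (Walk.reachable ((c.transfer _ hc).takeUntil u hu')).symm.trans
      (Walk.reachable ((c.transfer _ hc).takeUntil w hw'))
  obtain ⟨q, hq⟩ := hreach.exists_walk_length_eq_dist
  have h2 := SimpleGraph.dist_le (q.mapLe hle)
  rw [Walk.length_map] at h2
  unfold SimpleGraph.walkDist
  omega

end ObstructingHelpers

/-- If `G` is `(k/4)`-densely `(k,m)`-chordal on the family of bigons
formed by two geodesics between vertices (with `k ≥ 4`, `k ≥ 2m`), then for all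
vertices `a,b` with `d(a,b) ≥ k/2 + 4`, every geodesic `[ab]` and every vertex
`v₀ ∈ [ab]` with `d(v₀,{a,b}) ≥ k/4 + 1`, `v₀` is `ab`-`N_k`-obstructing. -/
theorem densely_chordal_on_bigons_implies_obstructing {V : Type*} (G : SimpleGraph V)
    (hconn : G.Connected) (k m : ℕ) (hk4 : 4 ≤ k) (hkm : 2 * m ≤ k)
    (hch : G.DenselyChordalOn (fun _ c => G.IsBigon c) ((k : ℝ) / 4) k m) :
    ∀ a b : V, k + 8 ≤ 2 * G.dist a b →
      ∀ p : G.Walk a b, G.IsGeodesic p →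
        ∀ v₀ ∈ p.support, k + 4 ≤ 4 * G.dist v₀ a → k + 4 ≤ 4 * G.dist v₀ b →
          ∀ γ : G.Walk a b, G.IsGeodesic γ →
            ∃ w ∈ γ.support, G.dist w v₀ ≤ k := by
  classical
  intro a b hD p hp v₀ hv₀ hva hvb γ hγ
  by_cases hvγ : v₀ ∈ γ.support
  · exact ⟨v₀, hvγ, by simp [SimpleGraph.dist_self]⟩
  rw [SimpleGraph.IsGeodesic] at hp hγ
  have hpv := (geo_split hconn p hp hv₀).2.2
  -- choose a' : the shared vertex of p and γ of maximal distance from a, at most dist a v₀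
  obtain ⟨a', ha'p, ha'γ, ha'd⟩ :=
    Nat.findGreatest_spec (P := fun n => ∃ x, x ∈ p.support ∧ x ∈ γ.support ∧ G.dist a x = n)
      (Nat.zero_le (G.dist a v₀))
      ⟨a, p.start_mem_support, γ.start_mem_support, SimpleGraph.dist_self⟩
  have hamax : ∀ x, x ∈ p.support → x ∈ γ.support → G.dist a x ≤ G.dist a v₀ →
      G.dist a x ≤ G.dist a a' := by
    intro x h1 h2 h3
    rw [ha'd]; exact Nat.le_findGreatest h3 ⟨x, h1, h2, rfl⟩
  have haN : G.dist a a' ≤ G.dist a v₀ := ha'd ▸ Nat.findGreatest_le _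
  -- choose b' : the shared vertex of maximal distance from b, at most dist v₀ b
  obtain ⟨b', hb'p, hb'γ, hb'd⟩ :=
    Nat.findGreatest_spec (P := fun n => ∃ x, x ∈ p.support ∧ x ∈ γ.support ∧ G.dist x b = n)
      (Nat.zero_le (G.dist v₀ b))
      ⟨b, p.end_mem_support, γ.end_mem_support, SimpleGraph.dist_self⟩
  have hbmax : ∀ x, x ∈ p.support → x ∈ γ.support → G.dist x b ≤ G.dist v₀ b →
      G.dist x b ≤ G.dist b' b := by
    intro x h1 h2 h3
    rw [hb'd]; exact Nat.le_findGreatest h3 ⟨x, h1, h2, rfl⟩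
  have hbM : G.dist b' b ≤ G.dist v₀ b := hb'd ▸ Nat.findGreatest_le _
  have hsa' := (geo_split hconn p hp ha'p).2.2
  have hsb' := (geo_split hconn p hp hb'p).2.2
  -- trivial cases
  by_cases hA : G.dist a' v₀ ≤ k
  · exact ⟨a', ha'γ, hA⟩
  by_cases hB : G.dist b' v₀ ≤ k
  · exact ⟨b', hb'γ, hB⟩
  push_neg at hA hB
  have hcA : G.dist a' v₀ = G.dist v₀ a' := SimpleGraph.dist_comm
  have hcB : G.dist b' v₀ = G.dist v₀ b' := SimpleGraph.dist_comm
  -- a' lies on the segment of p between a and v₀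
  have hsplitv := geo_split hconn p hp hv₀
  have eqA : G.dist a a' + G.dist a' v₀ = G.dist a v₀ := by
    have ha'mem : a' ∈ ((p.takeUntil v₀ hv₀).append (p.dropUntil v₀ hv₀)).support := by
      rw [p.take_spec hv₀]; exact ha'p
    rcases (SimpleGraph.Walk.mem_support_append_iff _ _).1 ha'mem with h1 | h2
    · exact (geo_split hconn _ hsplitv.1 h1).2.2
    · exfalso
      have hx := (geo_split hconn _ hsplitv.2.1 h2).2.2
      have h0 : G.dist v₀ a' = 0 := by omega
      exact hvγ (((hconn v₀ a').dist_eq_zero_iff.1 h0) ▸ ha'γ)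
  -- b' lies on the segment of p between v₀ and b
  have eqB : G.dist v₀ b' + G.dist b' b = G.dist v₀ b := by
    have hb'mem : b' ∈ ((p.takeUntil v₀ hv₀).append (p.dropUntil v₀ hv₀)).support := by
      rw [p.take_spec hv₀]; exact hb'p
    rcases (SimpleGraph.Walk.mem_support_append_iff _ _).1 hb'mem with h1 | h2
    · exfalso
      have hx := (geo_split hconn _ hsplitv.1 h1).2.2
      have h0 : G.dist b' v₀ = 0 := by omega
      exact hvγ (((hconn b' v₀).dist_eq_zero_iff.1 h0).symm ▸ hb'γ)
    · exact (geo_split hconn _ hsplitv.2.1 h2).2.2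
  -- the two geodesic arcs P (inside p) and Q (inside γ) from a' to b'
  have hsplita' := geo_split hconn p hp ha'p
  have hb'dp : b' ∈ (p.dropUntil a' ha'p).support := by
    have hb'mem : b' ∈ ((p.takeUntil a' ha'p).append (p.dropUntil a' ha'p)).support := by
      rw [p.take_spec ha'p]; exact hb'p
    rcases (SimpleGraph.Walk.mem_support_append_iff _ _).1 hb'mem with h1 | h2
    · exfalso
      have hx := (geo_split hconn _ hsplita'.1 h1).2.2
      omega
    · exact h2
  have hsplitdp := geo_split hconn _ hsplita'.2.1 hb'dp
  have hLval : G.dist a' b' = G.dist a' v₀ + G.dist v₀ b' := by omega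
  obtain ⟨P, hPlen, hv₀P, hPfacts⟩ :
      ∃ P : G.Walk a' b', P.length = G.dist a' b' ∧ v₀ ∈ P.support ∧
        ∀ z ∈ P.support, z ∈ p.support ∧
          G.dist a' z + G.dist z b' = G.dist a' b' ∧
          G.dist a' z + G.dist z b = G.dist a' b := by
    refine ⟨(p.dropUntil a' ha'p).takeUntil b' hb'dp, hsplitdp.1, ?_, ?_⟩
    · -- v₀ is on this arc
      have hv₀dp : v₀ ∈ (p.dropUntil a' ha'p).support := by
        have hmem : v₀ ∈ ((p.takeUntil a' ha'p).append (p.dropUntil a' ha'p)).support := by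
          rw [p.take_spec ha'p]; exact hv₀
        rcases (SimpleGraph.Walk.mem_support_append_iff _ _).1 hmem with h1 | h2
        · exfalso
          have hx := (geo_split hconn _ hsplita'.1 h1).2.2
          omega
        · exact h2
      have hmem2 : v₀ ∈ (((p.dropUntil a' ha'p).takeUntil b' hb'dp).append
          ((p.dropUntil a' ha'p).dropUntil b' hb'dp)).support := by
        rw [(p.dropUntil a' ha'p).take_spec hb'dp]; exact hv₀dp
      rcases (SimpleGraph.Walk.mem_support_append_iff _ _).1 hmem2 with h1 | h2
      · exact h1
      · exfalso
        have hx := (geo_split hconn _ hsplitdp.2.1 h2).2.2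
        omega
    · intro z hz
      have hzdp : z ∈ (p.dropUntil a' ha'p).support := SimpleGraph.Walk.support_takeUntil_subset _ _ hz
      have hzp : z ∈ p.support := SimpleGraph.Walk.support_dropUntil_subset _ _ hzdp
      exact ⟨hzp, (geo_split hconn _ hsplitdp.1 hz).2.2,
        (geo_split hconn _ hsplita'.2.1 hzdp).2.2⟩
  have hsplitγa' := geo_split hconn γ hγ ha'γ
  have hb'dγ : b' ∈ (γ.dropUntil a' ha'γ).support := by
    have hb'mem : b' ∈ ((γ.takeUntil a' ha'γ).append (γ.dropUntil a' ha'γ)).support := by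
      rw [γ.take_spec ha'γ]; exact hb'γ
    rcases (SimpleGraph.Walk.mem_support_append_iff _ _).1 hb'mem with h1 | h2
    · exfalso
      have hx := (geo_split hconn _ hsplitγa'.1 h1).2.2
      omega
    · exact h2
  obtain ⟨Q, hQlen, hQsub⟩ :
      ∃ Q : G.Walk a' b', Q.length = G.dist a' b' ∧ ∀ z ∈ Q.support, z ∈ γ.support := by
    refine ⟨(γ.dropUntil a' ha'γ).takeUntil b' hb'dγ,
      (geo_split hconn _ hsplitγa'.2.1 hb'dγ).1, ?_⟩
    intro z hz
    exact SimpleGraph.Walk.support_dropUntil_subset _ _ (SimpleGraph.Walk.support_takeUntil_subset _ _ hz)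
  -- P and Q intersect only in a' and b'
  have hdisj : ∀ x, x ∈ P.support → x ∈ Q.support → x = a' ∨ x = b' := by
    intro x hxP hxQ
    obtain ⟨hxp, hx3, hx1⟩ := hPfacts x hxP
    have hxγ : x ∈ γ.support := hQsub x hxQ
    have hx2 := (geo_split hconn p hp hxp).2.2
    by_cases hcase : G.dist a x ≤ G.dist a v₀
    · left
      have := hamax x hxp hxγ hcase
      have h0 : G.dist a' x = 0 := by omega
      exact ((hconn a' x).dist_eq_zero_iff.1 h0).symm
    · right
      push_neg at hcase
      have hxb : G.dist x b ≤ G.dist b' b := by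
        apply hbmax x hxp hxγ; omega
      have heq : G.dist a x = G.dist a b' := by omega
      exact pos_inj hconn p hp hxp hb'p heq
  have hPpath : P.IsPath := geo_isPath hconn P hPlen
  have hQpath : Q.IsPath := geo_isPath hconn Q hQlen
  -- edge subsets
  have hPedge : ∀ e ∈ P.edges, e ∈ (P.append Q.reverse).edges := by
    intro e he; rw [SimpleGraph.Walk.edges_append]; exact List.mem_append_left _ he
  have hQedge : ∀ e ∈ Q.edges, e ∈ (P.append Q.reverse).edges := by
    intro e he; rw [SimpleGraph.Walk.edges_append]
    exact List.mem_append_right _ (by rw [SimpleGraph.Walk.edges_reverse, List.mem_reverse]; exact he)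
  -- the bigon is a cycle
  have hcyc : (P.append Q.reverse).IsCycle := by
    rw [SimpleGraph.Walk.isCycle_def]
    refine ⟨?_, ?_, ?_⟩
    · rw [SimpleGraph.Walk.isTrail_def, SimpleGraph.Walk.edges_append, List.nodup_append]
      refine ⟨hPpath.isTrail.edges_nodup, hQpath.reverse.isTrail.edges_nodup, ?_⟩
      intro e heP e' heQ' hee; subst hee
      rw [SimpleGraph.Walk.edges_reverse, List.mem_reverse] at heQ'
      revert heP heQ'
      induction e using Sym2.ind with
      | _ x y =>
        intro heP heQ'
        have hadj : G.Adj x y := P.adj_of_mem_edges heP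
        have h1 : G.dist x y ≤ 1 := SimpleGraph.dist_le (SimpleGraph.Walk.cons hadj SimpleGraph.Walk.nil)
        have hx := hdisj x (P.fst_mem_support_of_mem_edges heP)
          (Q.fst_mem_support_of_mem_edges heQ')
        have hy := hdisj y (P.snd_mem_support_of_mem_edges heP)
          (Q.snd_mem_support_of_mem_edges heQ')
        rcases hx with rfl | rfl <;> rcases hy with rfl | rfl
        · exact hadj.ne rfl
        · omega
        · rw [SimpleGraph.dist_comm] at h1; omega
        · exact hadj.ne rfl
    · intro hnil
      have hnl := congrArg SimpleGraph.Walk.length hnil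
      rw [SimpleGraph.Walk.length_append, SimpleGraph.Walk.length_reverse, hPlen, hQlen] at hnl
      simp only [SimpleGraph.Walk.length_nil] at hnl
      omega
    · rw [SimpleGraph.Walk.tail_support_append, List.nodup_append]
      refine ⟨hPpath.support_nodup.sublist (List.tail_sublist _),
        hQpath.reverse.support_nodup.sublist (List.tail_sublist _), ?_⟩
      intro x hxP x' hxQ hxx; subst hxx
      have hx1 : x ∈ P.support := List.mem_of_mem_tail hxP
      have hx2 : x ∈ Q.support := by
        have := List.mem_of_mem_tail hxQ
        rwa [SimpleGraph.Walk.support_reverse, List.mem_reverse] at this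
      rcases hdisj x hx1 hx2 with rfl | rfl
      · have hnd := hPpath.support_nodup
        rw [P.support_eq_cons] at hnd
        exact (List.nodup_cons.1 hnd).1 hxP
      · have hnd := hQpath.reverse.support_nodup
        rw [Q.reverse.support_eq_cons] at hnd
        exact (List.nodup_cons.1 hnd).1 hxQ
  have hbig : G.IsBigon (P.append Q.reverse) := ⟨b', P, Q, hPlen, hQlen, rfl⟩
  have hclen : k ≤ (P.append Q.reverse).length := by
    rw [SimpleGraph.Walk.length_append, SimpleGraph.Walk.length_reverse, hPlen, hQlen]; omega
  have hv₀c : v₀ ∈ (P.append Q.reverse).support :=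
    (SimpleGraph.Walk.mem_support_append_iff _ _).2 (Or.inl hv₀P)
  obtain ⟨x, y, σ, hstrict, hσm, hxd⟩ := hch a' (P.append Q.reverse) hcyc hbig hclen v₀ hv₀c
  obtain ⟨⟨hσpath, hxc, hyc, hσlt⟩, -⟩ := hstrict
  have hxd4 : 4 * G.walkDist (P.append Q.reverse) v₀ x < k := by
    have h4 : (4 * G.walkDist (P.append Q.reverse) v₀ x : ℝ) < k := by
      push_cast; linarith
    exact_mod_cast h4
  have hdvx : G.dist v₀ x ≤ G.walkDist (P.append Q.reverse) v₀ x :=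
    dist_le_walkDist _ hv₀c hxc
  have noshort : ∀ {s t : V} (R : G.Walk s t), R.length = G.dist s t →
      (∀ e ∈ R.edges, e ∈ (P.append Q.reverse).edges) →
      x ∈ R.support → y ∈ R.support → False := by
    intro s t R hR hRe hxR hyR
    obtain ⟨σ', hσ'len, hσ'e⟩ := exists_seg hconn R hR hxR hyR
    have h1 : G.walkDist (P.append Q.reverse) x y ≤ σ'.length :=
      walkDist_le_of_seg _ σ' (fun e he => hRe e (hσ'e e he))
    have h2 : G.dist x y ≤ σ.length := SimpleGraph.dist_le σ
    omega
  have hsupc : ∀ z, z ∈ (P.append Q.reverse).support → z ∈ P.support ∨ z ∈ Q.support := by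
    intro z hz
    rcases (SimpleGraph.Walk.mem_support_append_iff _ _).1 hz with h | h
    · exact Or.inl h
    · right; rwa [SimpleGraph.Walk.support_reverse, List.mem_reverse] at h
  have hcx : G.dist x v₀ = G.dist v₀ x := SimpleGraph.dist_comm
  rcases hsupc x hxc with hxP | hxQ
  · rcases hsupc y hyc with hyP | hyQ
    · exact (noshort P hPlen hPedge hxP hyP).elim
    · refine ⟨y, hQsub y hyQ, ?_⟩
      have t1 : G.dist y v₀ ≤ G.dist y x + G.dist x v₀ := hconn.dist_triangle
      have t2 : G.dist y x ≤ σ.length := by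
        rw [SimpleGraph.dist_comm]; exact SimpleGraph.dist_le σ
      omega
  · exact ⟨x, hQsub x hxQ, by omega⟩
end
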